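/- (The SL(3) A-variety of the trefoil knot: ℓₐ = mₐ⁶.) Let z₁,…,z₄, y₁,…,y₄ ∈ ℂ, each different from 0 and 1, and assume all eight trefoil gluing equations c₁ = c₂ = ⋯ = c₈ = 1 hold. Define the exponentiated meridian path-coordinates A := y₁''/z₂'' and B := z₂''y₄''/(z₁''z₄''), and the exponentiated longitude path-coordinates P := z₁z₂z₄'·y₁''y₂''y₄'' / (z₁''z₂''z₃''·y₁y₂y₃') and Q := z₁·y₂·(y₄'')² / (z₁''z₂''(z₄'')²·y₁'y₂'·y₃³·y₄). Then P²·Q = (A²·B)⁶ and P·Q⁻¹ = (A·B⁻¹)⁶ (i.e. the longitude eigenvalues are the sixth powers of the meridian eigenvalues, ℓ₁ = m₁⁶ and ℓ₂ = m₂⁶, in cube-free form). -/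

import Mathlib

/-!
Since `(t⁻¹)' = (t'')⁻¹` and `(t⁻¹)'' = (t')⁻¹`, the shape factors of a parameter `t` and of its
inverse cancel in pairs. The gluing equations `c₁, c₂, c₅, c₆` therefore force
`y₃ = z₃⁻¹, y₄ = z₄⁻¹, y₂ = z₁⁻¹, y₁ = z₂⁻¹`, after which `c₃` and `c₇` collapse to `z₁ = z₂` and
`z₃ = z₄`. On what is left, `A = -z₁`, `B = -z₃`, `P = z₁⁶` and `Q = z₃⁶`.
-/

/-- The octahedron parameter `t' := (1−t)⁻¹`. -/
noncomputable def oPrime (t : ℂ) : ℂ := (1 - t)⁻¹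

/-- The octahedron parameter `t'' := 1 − t⁻¹`. -/
noncomputable def oDPrime (t : ℂ) : ℂ := 1 - t⁻¹

theorem oPrime_inv (t : ℂ) : oPrime t⁻¹ = (oDPrime t)⁻¹ := rfl

theorem oDPrime_inv (t : ℂ) : oDPrime t⁻¹ = (oPrime t)⁻¹ := by
  rw [oPrime, oDPrime, inv_inv, inv_inv]

theorem oPrime_ne_zero {t : ℂ} (h : t ≠ 1) : oPrime t ≠ 0 :=
  inv_ne_zero (sub_ne_zero.2 h.symm)

theorem oDPrime_ne_zero {t : ℂ} (h : t ≠ 1) : oDPrime t ≠ 0 :=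
  sub_ne_zero.2 fun h' => h (inv_eq_one.1 h'.symm)

theorem oPrime_mul_oDPrime_inv {t : ℂ} (h : t ≠ 1) : oPrime t * oDPrime t⁻¹ = 1 := by
  rw [oDPrime_inv, mul_inv_cancel₀ (oPrime_ne_zero h)]

theorem oDPrime_mul_oPrime_inv {t : ℂ} (h : t ≠ 1) : oDPrime t * oPrime t⁻¹ = 1 := by
  rw [oPrime_inv, mul_inv_cancel₀ (oDPrime_ne_zero h)]

theorem eq_one_of_mirror_factors {a s t : ℂ} (hs : s ≠ 1) (ht : t ≠ 1)
    (h : a * (oPrime s * oDPrime s⁻¹) * (oDPrime t * oPrime t⁻¹) = 1) : a = 1 := by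
  rwa [oPrime_mul_oDPrime_inv hs, oDPrime_mul_oPrime_inv ht, mul_one, mul_one] at h

theorem trefoil_SL3_A_variety_general
    (z₁ z₂ z₃ z₄ y₁ y₂ y₃ y₄ : ℂ)
    (hz₁1 : z₁ ≠ 1) (hz₂0 : z₂ ≠ 0) (hz₂1 : z₂ ≠ 1)
    (hz₃1 : z₃ ≠ 1) (hz₄0 : z₄ ≠ 0) (hz₄1 : z₄ ≠ 1)
    (hc₁ : z₃ * y₃ = 1)
    (hc₂ : z₄ * y₄ = 1)
    (hc₃ : z₁ * oPrime z₁ * oDPrime z₂ * oPrime z₄ * oDPrime z₄ *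
      (y₁ * oPrime y₁ * oDPrime y₂ * oPrime y₄ * oDPrime y₄) = 1)
    (hc₅ : z₁ * oPrime z₄ * oDPrime z₃ * (y₂ * oPrime y₃ * oDPrime y₄) = 1)
    (hc₆ : z₂ * oPrime z₃ * oDPrime z₄ * (y₁ * oPrime y₄ * oDPrime y₃) = 1)
    (hc₇ : z₃ * oPrime z₂ * oDPrime z₁ * (y₄ * oPrime y₁ * oDPrime y₂) = 1)
    (A B P Q : ℂ)
    (hA : A = oDPrime y₁ / oDPrime z₂)
    (hB : B = oDPrime z₂ * oDPrime y₄ / (oDPrime z₁ * oDPrime z₄))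
    (hP : P = z₁ * z₂ * oPrime z₄ * (oDPrime y₁ * oDPrime y₂ * oDPrime y₄) /
      (oDPrime z₁ * oDPrime z₂ * oDPrime z₃ * (y₁ * y₂ * oPrime y₃)))
    (hQ : Q = z₁ * y₂ * (oDPrime y₄) ^ 2 /
      (oDPrime z₁ * oDPrime z₂ * (oDPrime z₄) ^ 2 *
        (oPrime y₁ * oPrime y₂ * y₃ ^ 3 * y₄))) :
    P ^ 2 * Q = (A ^ 2 * B) ^ 6 ∧ P * Q⁻¹ = (A * B⁻¹) ^ 6 := by
  obtain rfl : y₃ = z₃⁻¹ := eq_inv_of_mul_eq_one_right hc₁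
  obtain rfl : y₄ = z₄⁻¹ := eq_inv_of_mul_eq_one_right hc₂
  obtain rfl : y₂ = z₁⁻¹ := eq_inv_of_mul_eq_one_right <|
    eq_one_of_mirror_factors hz₄1 hz₃1 (by linear_combination hc₅)
  obtain rfl : y₁ = z₂⁻¹ := eq_inv_of_mul_eq_one_right <|
    eq_one_of_mirror_factors hz₃1 hz₄1 (by linear_combination hc₆)
  obtain rfl : z₁ = z₂ := (mul_inv_eq_one₀ hz₂0).1 <| eq_one_of_mirror_factors hz₄1 hz₄1 <|
    eq_one_of_mirror_factors hz₁1 hz₂1 (by linear_combination hc₃)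
  obtain rfl : z₃ = z₄ := (mul_inv_eq_one₀ hz₄0).1 <|
    eq_one_of_mirror_factors hz₁1 hz₁1 (by linear_combination hc₇)
  simp only [oPrime, oDPrime, inv_inv] at hA hB hP hQ
  have eA : A = -z₁ := by rw [hA]; field_simp; ring
  have eB : B = -z₃ := by rw [hB]; field_simp; ring
  have eP : P = z₁ ^ 6 := by rw [hP]; field_simp; ring
  have eQ : Q = z₃ ^ 6 := by rw [hQ]; field_simp; ring
  subst eA eB eP eQ
  constructor
  · ring
  · field_simp

/-- The `SL(3)` A-variety of the trefoil knot: on the locus where all eight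
gluing equations `c₁ = ⋯ = c₈ = 1` hold, the exponentiated longitude
path-coordinates are sixth powers of the meridian path-coordinates:
`P²·Q = (A²·B)⁶` and `P·Q⁻¹ = (A·B⁻¹)⁶` (i.e. `ℓ₁ = m₁⁶` and `ℓ₂ = m₂⁶`). -/
theorem trefoil_SL3_A_variety
    (z₁ z₂ z₃ z₄ y₁ y₂ y₃ y₄ : ℂ)
    (hz₁0 : z₁ ≠ 0) (hz₁1 : z₁ ≠ 1) (hz₂0 : z₂ ≠ 0) (hz₂1 : z₂ ≠ 1)
    (hz₃0 : z₃ ≠ 0) (hz₃1 : z₃ ≠ 1) (hz₄0 : z₄ ≠ 0) (hz₄1 : z₄ ≠ 1)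
    (hy₁0 : y₁ ≠ 0) (hy₁1 : y₁ ≠ 1) (hy₂0 : y₂ ≠ 0) (hy₂1 : y₂ ≠ 1)
    (hy₃0 : y₃ ≠ 0) (hy₃1 : y₃ ≠ 1) (hy₄0 : y₄ ≠ 0) (hy₄1 : y₄ ≠ 1)
    (hc₁ : z₃ * y₃ = 1)
    (hc₂ : z₄ * y₄ = 1)
    (hc₃ : z₁ * oPrime z₁ * oDPrime z₂ * oPrime z₄ * oDPrime z₄ *
      (y₁ * oPrime y₁ * oDPrime y₂ * oPrime y₄ * oDPrime y₄) = 1)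
    (hc₄ : oDPrime z₁ * z₂ * oPrime z₂ * oPrime z₃ * oDPrime z₃ *
      (oDPrime y₁ * y₂ * oPrime y₂ * oPrime y₃ * oDPrime y₃) = 1)
    (hc₅ : z₁ * oPrime z₄ * oDPrime z₃ * (y₂ * oPrime y₃ * oDPrime y₄) = 1)
    (hc₆ : z₂ * oPrime z₃ * oDPrime z₄ * (y₁ * oPrime y₄ * oDPrime y₃) = 1)
    (hc₇ : z₃ * oPrime z₂ * oDPrime z₁ * (y₄ * oPrime y₁ * oDPrime y₂) = 1)
    (hc₈ : z₄ * oPrime z₁ * oDPrime z₂ * (y₃ * oPrime y₂ * oDPrime y₁) = 1)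
    (A B P Q : ℂ)
    (hA : A = oDPrime y₁ / oDPrime z₂)
    (hB : B = oDPrime z₂ * oDPrime y₄ / (oDPrime z₁ * oDPrime z₄))
    (hP : P = z₁ * z₂ * oPrime z₄ * (oDPrime y₁ * oDPrime y₂ * oDPrime y₄) /
      (oDPrime z₁ * oDPrime z₂ * oDPrime z₃ * (y₁ * y₂ * oPrime y₃)))
    (hQ : Q = z₁ * y₂ * (oDPrime y₄) ^ 2 /
      (oDPrime z₁ * oDPrime z₂ * (oDPrime z₄) ^ 2 *
        (oPrime y₁ * oPrime y₂ * y₃ ^ 3 * y₄))) :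
    P ^ 2 * Q = (A ^ 2 * B) ^ 6 ∧ P * Q⁻¹ = (A * B⁻¹) ^ 6 :=
  trefoil_SL3_A_variety_general z₁ z₂ z₃ z₄ y₁ y₂ y₃ y₄ hz₁1 hz₂0 hz₂1 hz₃1 hz₄0 hz₄1 hc₁ hc₂ hc₃
    hc₅ hc₆ hc₇ A B P Q hA hB hP hQ
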